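/- For every natural number n, the number of ordered pairs (f, f′) of finitely supported functions f, f′: ℕ × 𝒞 → ℕ such that every value of f and every value of f′ is a triangular number and Σ_{(a,𝔠)} 2^{a+|𝔠|} · (f(a,𝔠) + f′(a,𝔠)) = n is equal to the number of bipartitions of n. -/

import Mathlib

/-- A natural number is triangular if it is of the form `k * (k + 1) / 2`. -/
def IsTriangular (m : ℕ) : Prop := ∃ k : ℕ, m = k * (k + 1) / 2

/-- The sum `|𝔠| = c₁ + ⋯ + c_t` of a finite sequence `𝔠` of strictly positive integers. -/
def csum (c : List ℕ+) : ℕ := (c.map fun x => (x : ℕ)).sum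

/-!
Both sides are generated by the same recursion. By the theory of 2-cores and 2-quotients, a
partition `λ` of `n` corresponds to a triple `(k, μ, ν)` with `n = k(k+1)/2 + 2|μ| + 2|ν|`: the
2-core of `λ` is the staircase of size `k(k+1)/2` and `(μ, ν)` is its 2-quotient. Both are read off
the β-set of `λ` split by parity. On the other side, `ℕ × 𝒞` is a binary tree rooted at `(0, [])`
in which the two children `(a + 1, 𝔠)` and `(0, (a + 1) :: 𝔠)` of `(a, 𝔠)` have weight
`a + |𝔠| + 1`. So a finitely supported triangular-valued `f` is the same as its root value
`k(k+1)/2` and two such functions `f₁, f₂` on the subtrees, with weighted sum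
`k(k+1)/2 + 2 Σ f₁ + 2 Σ f₂`. Strong induction on the weight then matches the two sides.
-/

open Finset

namespace BipartitionCount

section LevelRecursion

variable {K X Y : Type*}

abbrev Splitting (c : K → ℕ) (n : ℕ) : Type _ :=
  {q : K × ℕ × ℕ // c q.1 + 2 * q.2.1 + 2 * q.2.2 = n}

def splittingSigmaEquiv (c : K → ℕ) (w : X → ℕ) (n : ℕ) :
    {p : K × X × X // c p.1 + 2 * w p.2.1 + 2 * w p.2.2 = n} ≃
      Σ q : Splitting c n, {x // w x = q.1.2.1} × {x // w x = q.1.2.2} where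
  toFun p := ⟨⟨(p.1.1, w p.1.2.1, w p.1.2.2), p.2⟩, ⟨p.1.2.1, rfl⟩, ⟨p.1.2.2, rfl⟩⟩
  invFun q := ⟨(q.1.1.1, q.2.1.1, q.2.2.1), by rw [q.2.1.2, q.2.2.2]; exact q.1.2⟩
  left_inv _ := rfl
  right_inv := by
    intro ⟨⟨⟨k, a, b⟩, h⟩, ⟨x, hx⟩, ⟨y, hy⟩⟩
    dsimp only at hx hy
    subst hx hy
    rfl

theorem exists_weight_equiv_of_level_equiv (c : K → ℕ) (wX : X → ℕ) (wY : Y → ℕ)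
    (hX : ∃! x, wX x = 0) (hY : ∃! y, wY y = 0)
    (eX : ∀ n, 0 < n →
      {x // wX x = n} ≃ {p : K × X × X // c p.1 + 2 * wX p.2.1 + 2 * wX p.2.2 = n})
    (eY : ∀ n, 0 < n →
      {y // wY y = n} ≃ {p : K × Y × Y // c p.1 + 2 * wY p.2.1 + 2 * wY p.2.2 = n}) :
    ∃ e : X ≃ Y, ∀ x, wY (e x) = wX x := by
  have levels : ∀ n, Nonempty ({x // wX x = n} ≃ {y // wY y = n}) := by
    intro n
    induction n using Nat.strong_induction_on with
    | _ n ih =>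
      rcases Nat.eq_zero_or_pos n with rfl | hn
      · obtain ⟨uX⟩ := (unique_subtype_iff_existsUnique _).2 hX
        obtain ⟨uY⟩ := (unique_subtype_iff_existsUnique _).2 hY
        exact ⟨Equiv.ofUnique _ _⟩
      · have lt (q : Splitting c n) : q.1.2.1 < n ∧ q.1.2.2 < n := by have := q.2; omega
        exact ⟨(eX n hn).trans <| (splittingSigmaEquiv c wX n).trans <|
          (Equiv.sigmaCongrRight fun q =>
            (ih _ (lt q).1).some.prodCongr (ih _ (lt q).2).some).trans <|
          (splittingSigmaEquiv c wY n).symm.trans (eY n hn).symm⟩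
  refine ⟨(Equiv.sigmaFiberEquiv wX).symm.trans <|
    (Equiv.sigmaCongrRight fun n => (levels n).some).trans (Equiv.sigmaFiberEquiv wY), ?_⟩
  intro x
  exact ((levels (wX x)).some ⟨x, rfl⟩).2

end LevelRecursion

section Triangular

theorem isTriangular_iff (m : ℕ) : IsTriangular m ↔ ∃ k, (k + 1).choose 2 = m := by
  simp only [IsTriangular, Nat.choose_two_right, Nat.add_sub_cancel, mul_comm, eq_comm]

theorem strictMono_succ_choose_two : StrictMono fun k => (k + 1).choose 2 :=
  strictMono_nat_of_lt_succ fun k => by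
    simp [Nat.choose_succ_succ' (k + 1) 1]

theorem le_succ_choose_two (k : ℕ) : k ≤ (k + 1).choose 2 :=
  strictMono_succ_choose_two.id_le k

noncomputable def triangularEquiv : ℕ ≃ {m // IsTriangular m} :=
  (Equiv.ofInjective _ strictMono_succ_choose_two.injective).trans
    (Equiv.subtypeEquivRight fun m => (isTriangular_iff m).symm)

end Triangular

section BetaSets

def shiftUp (l : List ℕ) : List ℕ := l.mapIdx fun i x => x + i

def shiftDown (l : List ℕ) : List ℕ := l.mapIdx fun i x => x - i

@[simp] theorem length_shiftUp (l : List ℕ) : (shiftUp l).length = l.length := List.length_mapIdx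

@[simp] theorem length_shiftDown (l : List ℕ) : (shiftDown l).length = l.length :=
  List.length_mapIdx

@[simp] theorem getElem_shiftUp (l : List ℕ) (i : ℕ) (h : i < (shiftUp l).length) :
    (shiftUp l)[i] = l[i]'(by simpa using h) + i := List.getElem_mapIdx

@[simp] theorem getElem_shiftDown (l : List ℕ) (i : ℕ) (h : i < (shiftDown l).length) :
    (shiftDown l)[i] = l[i]'(by simpa using h) - i := List.getElem_mapIdx

theorem le_getElem_of_pairwise_lt {l : List ℕ} (hl : l.Pairwise (· < ·)) :
    ∀ (i : ℕ) (hi : i < l.length), i ≤ l[i]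
  | 0, _ => Nat.zero_le _
  | i + 1, hi => by
    have := le_getElem_of_pairwise_lt hl i (by omega)
    have := List.pairwise_iff_getElem.1 hl i (i + 1) (by omega) hi (by omega)
    omega

theorem pairwise_lt_shiftUp {l : List ℕ} (hl : l.Pairwise (· ≤ ·)) :
    (shiftUp l).Pairwise (· < ·) := by
  rw [List.pairwise_iff_getElem] at hl ⊢
  intro i j hi hj hij
  simp only [getElem_shiftUp]
  have := hl i j (by simpa using hi) (by simpa using hj) hij
  omega

theorem pairwise_le_shiftDown {l : List ℕ} (hl : l.Pairwise (· < ·)) :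
    (shiftDown l).Pairwise (· ≤ ·) := by
  rw [← List.isChain_iff_pairwise, List.isChain_iff_getElem]
  intro i hi
  simp only [getElem_shiftDown]
  have := List.pairwise_iff_getElem.1 hl i (i + 1) (by simp at hi; omega) (by simpa using hi)
    (by omega)
  omega

theorem shiftDown_shiftUp (l : List ℕ) : shiftDown (shiftUp l) = l :=
  List.ext_getElem (by simp) fun i _ _ => by simp

theorem shiftUp_shiftDown {l : List ℕ} (hl : l.Pairwise (· < ·)) : shiftUp (shiftDown l) = l :=
  List.ext_getElem (by simp) fun i _ h => by
    have := le_getElem_of_pairwise_lt hl i h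
    simp only [getElem_shiftUp, getElem_shiftDown]
    omega

theorem sum_shiftUp (l : List ℕ) : (shiftUp l).sum = l.sum + l.length.choose 2 := by
  induction l using List.reverseRecOn with
  | nil => rfl
  | append_singleton l a ih =>
    simp only [shiftUp, List.mapIdx_concat, List.sum_append, List.sum_singleton,
      List.length_append, List.length_singleton] at ih ⊢
    rw [ih, Nat.choose_succ_succ' l.length 1, Nat.choose_one_right]
    ring

theorem pairwise_lt_shiftUp_sort (s : Multiset ℕ) :
    (shiftUp (s.sort (· ≤ ·))).Pairwise (· < ·) :=
  pairwise_lt_shiftUp (s.pairwise_sort _)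

def betaEquiv : Multiset ℕ ≃ Finset ℕ where
  toFun s := (shiftUp (s.sort (· ≤ ·))).toFinset
  invFun B := (shiftDown (B.sort (· ≤ ·)) : Multiset ℕ)
  left_inv s := by
    have h := pairwise_lt_shiftUp_sort s
    dsimp only
    rw [(List.toFinset_sort _ h.nodup).2 (h.imp le_of_lt), shiftDown_shiftUp, Multiset.sort_eq]
  right_inv B := by
    have h := B.sortedLT_sort.pairwise
    dsimp only
    rw [Multiset.coe_sort, List.mergeSort_eq_self _ (pairwise_le_shiftDown h),
      shiftUp_shiftDown h, Finset.sort_toFinset]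

theorem card_betaEquiv (s : Multiset ℕ) : #(betaEquiv s) = s.card := by
  simp [betaEquiv, List.toFinset_card_of_nodup (pairwise_lt_shiftUp_sort s).nodup]

theorem sum_betaEquiv (s : Multiset ℕ) :
    ∑ x ∈ betaEquiv s, x = s.sum + s.card.choose 2 := by
  rw [betaEquiv, Equiv.coe_fn_mk,
    List.sum_toFinset (fun x => x) (pairwise_lt_shiftUp_sort s).nodup, List.map_id', sum_shiftUp,
    Multiset.length_sort, ← Multiset.sum_coe, Multiset.sort_eq]

end BetaSets

section TwoQuotient

def parityEquiv : Finset ℕ ≃ Finset ℕ × Finset ℕ :=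
  Equiv.natSumNatEquivNat.symm.finsetCongr.trans Finset.sumEquiv.toEquiv

theorem parityEquiv_symm_apply (E O : Finset ℕ) :
    parityEquiv.symm (E, O) = (E.disjSum O).map Equiv.natSumNatEquivNat.toEmbedding := by
  simp [parityEquiv, Equiv.finsetCongr]

theorem card_parityEquiv_symm (E O : Finset ℕ) : #(parityEquiv.symm (E, O)) = #E + #O := by
  rw [parityEquiv_symm_apply, card_map, card_disjSum]

theorem sum_parityEquiv_symm (E O : Finset ℕ) :
    ∑ x ∈ parityEquiv.symm (E, O), x = 2 * ∑ x ∈ E, x + 2 * ∑ x ∈ O, x + #O := by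
  rw [parityEquiv_symm_apply, sum_map, sum_disjSum, mul_sum, mul_sum, card_eq_sum_ones,
    add_assoc, ← sum_add_distrib]
  simp

def quotientEquiv : Multiset ℕ ≃ Multiset ℕ × Multiset ℕ :=
  betaEquiv.trans (parityEquiv.trans (betaEquiv.symm.prodCongr betaEquiv.symm))

theorem betaEquiv_quotientEquiv_symm (α β : Multiset ℕ) :
    betaEquiv (quotientEquiv.symm (α, β)) = parityEquiv.symm (betaEquiv α, betaEquiv β) := by
  simp [quotientEquiv]

theorem card_quotientEquiv_symm (α β : Multiset ℕ) :
    (quotientEquiv.symm (α, β)).card = α.card + β.card := by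
  rw [← card_betaEquiv, betaEquiv_quotientEquiv_symm, card_parityEquiv_symm, card_betaEquiv,
    card_betaEquiv]

theorem sum_quotientEquiv_symm (α β : Multiset ℕ) :
    (quotientEquiv.symm (α, β)).sum + (α.card + β.card).choose 2 =
      2 * (α.sum + α.card.choose 2) + 2 * (β.sum + β.card.choose 2) + β.card := by
  rw [← card_quotientEquiv_symm, ← sum_betaEquiv, betaEquiv_quotientEquiv_symm,
    sum_parityEquiv_symm, sum_betaEquiv, sum_betaEquiv, card_betaEquiv]

-- On a 2-abacus with `e` beads on the even runner and `o` on the odd one, the 2-core is the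
-- staircase with `coreIndex e o` rows; for `e + o = t` even, `beadCounts t` inverts this.
def coreIndex (e o : ℕ) : ℕ := if e ≤ o then o - e else e - o - 1

def beadCounts (t k : ℕ) : ℕ × ℕ :=
  if k % 2 = 0 then ((t - k) / 2, (t + k) / 2) else ((t + k + 1) / 2, (t - k - 1) / 2)

theorem choose_two_add_choose_two_coreIndex (e o : ℕ) :
    (e + o).choose 2 + (coreIndex e o + 1).choose 2 = 2 * e.choose 2 + 2 * o.choose 2 + o := by
  apply Nat.cast_injective (R := ℚ)
  unfold coreIndex
  split_ifs with h
  · obtain ⟨d, rfl⟩ := Nat.exists_eq_add_of_le h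
    push_cast [Nat.add_sub_cancel_left, Nat.cast_choose_two]
    ring
  · obtain ⟨d, rfl⟩ := Nat.exists_eq_add_of_lt (not_le.1 h)
    push_cast [show o + d + 1 - o - 1 = d by omega, Nat.cast_choose_two]
    ring

theorem beadCounts_coreIndex {e o : ℕ} (h : (e + o) % 2 = 0) :
    beadCounts (e + o) (coreIndex e o) = (e, o) := by
  unfold beadCounts coreIndex
  split_ifs <;> ext <;> simp only <;> omega

theorem beadCounts_fst_add_snd {t k : ℕ} (ht : t % 2 = 0) (hk : k ≤ t) :
    (beadCounts t k).1 + (beadCounts t k).2 = t := by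
  unfold beadCounts; split_ifs <;> omega

theorem coreIndex_beadCounts {t k : ℕ} (ht : t % 2 = 0) (hk : k ≤ t) :
    coreIndex (beadCounts t k).1 (beadCounts t k).2 = k := by
  unfold beadCounts coreIndex; split_ifs <;> omega

theorem le_beadCounts {t : ℕ} (ht : t % 2 = 0) (k : ℕ) :
    t ≤ 2 * (beadCounts t k).1 + k + 1 ∧ t ≤ 2 * (beadCounts t k).2 + k + 1 := by
  unfold beadCounts; split_ifs <;> omega

end TwoQuotient

section Partitions

def pad (t : ℕ) (s : Multiset ℕ) : Multiset ℕ := s + Multiset.replicate (t - s.card) 0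

theorem card_pad {t : ℕ} {s : Multiset ℕ} (h : s.card ≤ t) : (pad t s).card = t := by
  simp [pad]; omega

theorem sum_pad (t : ℕ) (s : Multiset ℕ) : (pad t s).sum = s.sum := by
  simp [pad]

theorem filter_pad (t : ℕ) {s : Multiset ℕ} (hs : ∀ i ∈ s, 0 < i) :
    (pad t s).filter (· ≠ 0) = s := by
  rw [pad, Multiset.filter_add, Multiset.filter_eq_self.2 fun i hi => (hs i hi).ne',
    Multiset.filter_eq_nil.2 fun i hi => by simp [Multiset.eq_of_mem_replicate hi], add_zero]

theorem pad_filter {t : ℕ} {s : Multiset ℕ} (h : s.card = t) : pad t (s.filter (· ≠ 0)) = s := by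
  conv_rhs => rw [← Multiset.filter_add_not (· ≠ 0) s]
  have hcard := congrArg Multiset.card (Multiset.filter_add_not (· ≠ 0) s)
  rw [Multiset.card_add] at hcard
  rw [pad]
  congr 1
  rw [eq_comm, Multiset.eq_replicate]
  exact ⟨by omega, fun b hb => by simpa using Multiset.of_mem_filter hb⟩

theorem card_parts_le {n : ℕ} (p : Nat.Partition n) : p.parts.card ≤ n := by
  simpa [p.parts_sum] using Multiset.card_nsmul_le_sum (a := 1) fun _ hi => p.parts_pos hi

theorem sigma_ofMultiset_eq {s : Multiset ℕ} {m : ℕ} {p : Nat.Partition m}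
    (h : s.filter (· ≠ 0) = p.parts) :
    (⟨s.sum, Nat.Partition.ofMultiset s⟩ : Σ m, Nat.Partition m) = ⟨m, p⟩ := by
  obtain rfl : s.sum = m := by
    rw [← (Nat.Partition.ofMultiset s).parts_sum, ← p.parts_sum]
    exact congrArg Multiset.sum h
  congr 1
  exact Nat.Partition.ext h

-- `2 * n` beads: an even number, at least the number of parts of a partition of `n`, and enough
-- for every 2-core of size at most `n` (see `le_beadCounts`).
def twoQuotient (n : ℕ) (s : Multiset ℕ) :
    ℕ × (Σ m, Nat.Partition m) × (Σ m, Nat.Partition m) :=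
  let αβ := quotientEquiv (pad (2 * n) s)
  (coreIndex αβ.1.card αβ.2.card, ⟨_, .ofMultiset αβ.1⟩, ⟨_, .ofMultiset αβ.2⟩)

def ofTwoQuotient (n : ℕ) (q : ℕ × (Σ m, Nat.Partition m) × (Σ m, Nat.Partition m)) :
    Σ m, Nat.Partition m :=
  let eo := beadCounts (2 * n) q.1
  ⟨_, .ofMultiset (quotientEquiv.symm (pad eo.1 q.2.1.2.parts, pad eo.2 q.2.2.2.parts))⟩

theorem twoQuotient_spec {n : ℕ} (p : Nat.Partition n) :
    ((twoQuotient n p.parts).1 + 1).choose 2 + 2 * (twoQuotient n p.parts).2.1.1 +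
        2 * (twoQuotient n p.parts).2.2.1 = n ∧
      ofTwoQuotient n (twoQuotient n p.parts) = ⟨n, p⟩ := by
  obtain ⟨α, β, hαβ⟩ : ∃ α β, quotientEquiv (pad (2 * n) p.parts) = (α, β) := ⟨_, _, rfl⟩
  have hpad : quotientEquiv.symm (α, β) = pad (2 * n) p.parts := by
    rw [← hαβ, Equiv.symm_apply_apply]
  have hcard : α.card + β.card = 2 * n := by
    rw [← card_quotientEquiv_symm, hpad, card_pad (by have := card_parts_le p; omega)]
  have hsum := sum_quotientEquiv_symm α β
  have hcore := choose_two_add_choose_two_coreIndex α.card β.card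
  rw [hpad, sum_pad, p.parts_sum, hcard] at hsum
  rw [hcard] at hcore
  simp only [twoQuotient, ofTwoQuotient]
  rw [hαβ]
  dsimp only
  refine ⟨by omega, ?_⟩
  rw [← hcard, beadCounts_coreIndex (by omega), Nat.Partition.ofMultiset_parts,
    Nat.Partition.ofMultiset_parts, pad_filter rfl, pad_filter rfl, hpad]
  exact sigma_ofMultiset_eq (filter_pad _ fun i hi => p.parts_pos hi)

theorem ofTwoQuotient_spec {n : ℕ} (q : ℕ × (Σ m, Nat.Partition m) × (Σ m, Nat.Partition m))
    (hq : (q.1 + 1).choose 2 + 2 * q.2.1.1 + 2 * q.2.2.1 = n) :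
    (ofTwoQuotient n q).1 = n ∧ twoQuotient n (ofTwoQuotient n q).2.parts = q := by
  obtain ⟨k, ⟨a, μ⟩, ⟨b, ν⟩⟩ := q
  dsimp only at hq
  have hT := le_succ_choose_two k
  have hk : k ≤ 2 * n := by omega
  obtain ⟨e, o, heo⟩ : ∃ e o, beadCounts (2 * n) k = (e, o) := ⟨_, _, rfl⟩
  have hadd : e + o = 2 * n := by simpa [heo] using beadCounts_fst_add_snd (by omega) hk
  have hcore : coreIndex e o = k := by simpa [heo] using coreIndex_beadCounts (by omega) hk
  have hle : 2 * n ≤ 2 * e + k + 1 ∧ 2 * n ≤ 2 * o + k + 1 := by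
    simpa [heo] using le_beadCounts (t := 2 * n) (by omega) k
  have hA : (pad e μ.parts).card = e := card_pad (by have := card_parts_le μ; omega)
  have hB : (pad o ν.parts).card = o := card_pad (by have := card_parts_le ν; omega)
  have hsum := sum_quotientEquiv_symm (pad e μ.parts) (pad o ν.parts)
  have hid := choose_two_add_choose_two_coreIndex e o
  rw [hA, hB, sum_pad, sum_pad, μ.parts_sum, ν.parts_sum] at hsum
  rw [hcore] at hid
  have hcard : (quotientEquiv.symm (pad e μ.parts, pad o ν.parts)).card = 2 * n := by
    rw [card_quotientEquiv_symm, hA, hB, hadd]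
  rw [ofTwoQuotient, heo]
  refine ⟨by dsimp only; omega, ?_⟩
  rw [Nat.Partition.ofMultiset_parts, twoQuotient, pad_filter hcard, Equiv.apply_symm_apply]
  dsimp only
  rw [hA, hB, hcore, sigma_ofMultiset_eq (filter_pad _ fun i hi => μ.parts_pos hi),
    sigma_ofMultiset_eq (filter_pad _ fun i hi => ν.parts_pos hi)]

def partitionLevelEquiv (n : ℕ) :
    {p : Σ m, Nat.Partition m // p.1 = n} ≃
      {q : ℕ × (Σ m, Nat.Partition m) × (Σ m, Nat.Partition m) //
        (q.1 + 1).choose 2 + 2 * q.2.1.1 + 2 * q.2.2.1 = n} where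
  toFun p := ⟨twoQuotient n p.1.2.parts, by obtain ⟨⟨m, p⟩, rfl⟩ := p; exact (twoQuotient_spec p).1⟩
  invFun q := ⟨ofTwoQuotient n q.1, (ofTwoQuotient_spec q.1 q.2).1⟩
  left_inv := by rintro ⟨⟨m, p⟩, rfl⟩; exact Subtype.ext (twoQuotient_spec p).2
  right_inv q := Subtype.ext (ofTwoQuotient_spec q.1 q.2).2

end Partitions

section TreeFunctions

theorem finsum_option {α M : Type*} [AddCommMonoid M] {f : Option α → M}
    (hf : (Function.support f).Finite) : ∑ᶠ o, f o = f none + ∑ᶠ a, f (some a) := by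
  rw [← finsum_mem_univ, ← Set.range_some_union_none,
    finsum_mem_union' (by simp) (hf.inter_of_right _) (hf.inter_of_right _),
    finsum_mem_range (Option.some_injective α), finsum_mem_singleton, add_comm]

theorem finsum_sum_type {α β M : Type*} [AddCommMonoid M] {f : α ⊕ β → M}
    (hf : (Function.support f).Finite) :
    ∑ᶠ x, f x = ∑ᶠ a, f (.inl a) + ∑ᶠ b, f (.inr b) := by
  rw [← finsum_mem_univ, ← Set.range_inl_union_range_inr,
    finsum_mem_union' Set.isCompl_range_inl_range_inr.disjoint (hf.inter_of_right _)
      (hf.inter_of_right _),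
    finsum_mem_range Sum.inl_injective, finsum_mem_range Sum.inr_injective]

def weight (i : ℕ × List ℕ+) : ℕ := i.1 + csum i.2

def treeEquiv : Option ((ℕ × List ℕ+) ⊕ (ℕ × List ℕ+)) ≃ ℕ × List ℕ+ where
  toFun
    | none => (0, [])
    | some (.inl (a, c)) => (a + 1, c)
    | some (.inr (a, c)) => (0, a.succPNat :: c)
  invFun
    | (0, []) => none
    | (a + 1, c) => some (.inl (a, c))
    | (0, x :: c) => some (.inr (x.natPred, c))
  left_inv := by rintro (_ | ⟨a, c⟩ | ⟨a, c⟩) <;> simp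
  right_inv := by rintro ⟨_ | a, _ | ⟨x, c⟩⟩ <;> simp

@[simp] theorem weight_treeEquiv_none : weight (treeEquiv none) = 0 := rfl

@[simp] theorem weight_treeEquiv_inl (i : ℕ × List ℕ+) :
    weight (treeEquiv (some (.inl i))) = weight i + 1 := by
  simp [treeEquiv, weight]; ring

@[simp] theorem weight_treeEquiv_inr (i : ℕ × List ℕ+) :
    weight (treeEquiv (some (.inr i))) = weight i + 1 := by
  simp [treeEquiv, weight, csum]; ring

def funSplit : (ℕ × List ℕ+ → ℕ) ≃ ℕ × (ℕ × List ℕ+ → ℕ) × (ℕ × List ℕ+ → ℕ) :=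
  (treeEquiv.arrowCongr (.refl ℕ)).symm.trans <| Equiv.piOptionEquivProd.trans <|
    (Equiv.refl ℕ).prodCongr (Equiv.sumArrowEquivProdArrow _ _ _)

theorem funSplit_apply (f : ℕ × List ℕ+ → ℕ) :
    funSplit f = (f (treeEquiv none), fun i => f (treeEquiv (some (.inl i))),
      fun i => f (treeEquiv (some (.inr i)))) := rfl

def IsFinTriangular (f : ℕ × List ℕ+ → ℕ) : Prop :=
  (∀ i, IsTriangular (f i)) ∧ (Function.support f).Finite

theorem isFinTriangular_iff_funSplit (f : ℕ × List ℕ+ → ℕ) :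
    IsFinTriangular f ↔ IsTriangular (funSplit f).1 ∧
      IsFinTriangular (funSplit f).2.1 ∧ IsFinTriangular (funSplit f).2.2 := by
  have hsupp : (Function.support f).Finite ↔ (Function.support (f ∘ treeEquiv)).Finite := by
    rw [Function.support_comp_eq_preimage]
    exact ⟨fun h => h.preimage treeEquiv.injective.injOn, (·.of_preimage treeEquiv.surjective)⟩
  simp only [IsFinTriangular, funSplit_apply, hsupp, Set.finite_option,
    ← Set.finite_preimage_inl_and_inr, Option.forall, Sum.forall,
    ← treeEquiv.forall_congr_right (q := fun i => IsTriangular (f i))]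
  exact ⟨fun ⟨⟨h0, h1, h2⟩, s1, s2⟩ => ⟨h0, ⟨h1, s1⟩, h2, s2⟩,
    fun ⟨h0, ⟨h1, s1⟩, h2, s2⟩ => ⟨⟨h0, h1, h2⟩, s1, s2⟩⟩

noncomputable def weightedSum (f : ℕ × List ℕ+ → ℕ) : ℕ := ∑ᶠ i, 2 ^ weight i * f i

theorem weightedSum_eq_funSplit {f : ℕ × List ℕ+ → ℕ} (hf : (Function.support f).Finite) :
    weightedSum f = (funSplit f).1 + 2 * weightedSum (funSplit f).2.1 +
      2 * weightedSum (funSplit f).2.2 := by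
  have hg : (Function.support fun i => 2 ^ weight i * f i).Finite :=
    hf.subset (Function.support_mul_subset_right _ _)
  have hg' := hg.preimage treeEquiv.injective.injOn
  rw [weightedSum, ← finsum_comp_equiv treeEquiv, finsum_option hg',
    finsum_sum_type (hg'.preimage (Option.some_injective _).injOn), funSplit_apply,
    weightedSum, weightedSum, mul_finsum, mul_finsum]
  simp [pow_succ, mul_assoc, mul_comm, add_assoc]

theorem weightedSum_eq_zero_iff {f : ℕ × List ℕ+ → ℕ} (hf : (Function.support f).Finite) :
    weightedSum f = 0 ↔ f = 0 := by
  refine ⟨fun h => funext fun i => ?_, fun h => by simp [h, weightedSum]⟩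
  have := single_le_finsum i (hf.subset (Function.support_mul_subset_right _ _))
    fun j => Nat.zero_le (2 ^ weight j * f j)
  rw [← weightedSum, h, Nat.le_zero, mul_eq_zero] at this
  exact this.resolve_left (by positivity)

theorem finsum_add_eq_weightedSum_add {f g : ℕ × List ℕ+ → ℕ} (hf : (Function.support f).Finite)
    (hg : (Function.support g).Finite) :
    ∑ᶠ i : ℕ × List ℕ+, 2 ^ (i.1 + csum i.2) * (f i + g i) = weightedSum f + weightedSum g := by
  simp only [mul_add]
  exact finsum_add_distrib (hf.subset (Function.support_mul_subset_right _ _))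
    (hg.subset (Function.support_mul_subset_right _ _))

noncomputable def finTriangularEquiv :
    {f // IsFinTriangular f} ≃ ℕ × {f // IsFinTriangular f} × {f // IsFinTriangular f} :=
  (funSplit.subtypeEquiv isFinTriangular_iff_funSplit).trans <|
    Equiv.subtypeProdEquivProd.trans <|
      triangularEquiv.symm.prodCongr Equiv.subtypeProdEquivProd

theorem weightedSum_eq_finTriangularEquiv (f : {f // IsFinTriangular f}) :
    weightedSum f.1 = ((finTriangularEquiv f).1 + 1).choose 2 +
      2 * weightedSum (finTriangularEquiv f).2.1.1 +
      2 * weightedSum (finTriangularEquiv f).2.2.1 := by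
  have hroot := ((isFinTriangular_iff_funSplit f.1).1 f.2).1
  rw [weightedSum_eq_funSplit f.2.2]
  congr 2
  exact congrArg Subtype.val (triangularEquiv.apply_symm_apply ⟨_, hroot⟩).symm

end TreeFunctions

theorem exists_equiv_partition_fst_eq_weightedSum :
    ∃ e : {f // IsFinTriangular f} ≃ Σ m, Nat.Partition m, ∀ f, (e f).1 = weightedSum f.1 :=
  exists_weight_equiv_of_level_equiv (fun k => (k + 1).choose 2)
    (fun f : {f // IsFinTriangular f} => weightedSum f.1) (fun p : Σ m, Nat.Partition m => p.1)
    ⟨⟨0, fun _ => ⟨0, rfl⟩, by simp⟩, (weightedSum_eq_zero_iff (by simp)).2 rfl,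
      fun f hf => Subtype.ext ((weightedSum_eq_zero_iff f.2.2).1 hf)⟩
    ⟨⟨0, default⟩, rfl, by rintro ⟨m, p⟩ rfl; rw [Subsingleton.elim p default]⟩
    (fun n _ => finTriangularEquiv.subtypeEquiv fun f => by
      rw [weightedSum_eq_finTriangularEquiv])
    (fun n _ => partitionLevelEquiv n)

end BipartitionCount

open BipartitionCount

/-- For every natural number `n`, the number of ordered pairs `(f, f′)` of finitely supported
functions `ℕ × 𝒞 → ℕ` all of whose values are triangular numbers and which satisfy
`∑ 2^{a + |𝔠|} * (f (a, 𝔠) + f′ (a, 𝔠)) = n` equals the number of bipartitions of `n`. -/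
theorem triangular_pair_count_eq_bipartitions (n : ℕ) :
    Set.ncard { ff : (ℕ × List ℕ+ → ℕ) × (ℕ × List ℕ+ → ℕ) |
      (∀ i, IsTriangular (ff.1 i)) ∧ (∀ i, IsTriangular (ff.2 i)) ∧
      (Function.support ff.1).Finite ∧ (Function.support ff.2).Finite ∧
      ∑ᶠ i : ℕ × List ℕ+, 2 ^ (i.1 + csum i.2) * (ff.1 i + ff.2 i) = n } =
    Set.ncard { pq : (Σ m : ℕ, Nat.Partition m) × (Σ m : ℕ, Nat.Partition m) |
      pq.1.1 + pq.2.1 = n } := by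
  obtain ⟨e, he⟩ := exists_equiv_partition_fst_eq_weightedSum
  rw [← Nat.card_coe_set_eq, ← Nat.card_coe_set_eq]
  refine Nat.card_congr <| Equiv.trans (β := {fg : {f // IsFinTriangular f} ×
    {f // IsFinTriangular f} // weightedSum fg.1.1 + weightedSum fg.2.1 = n}) ?_ <|
    (e.prodCongr e).subtypeEquiv fun fg => by simp [he]
  exact
    { toFun := fun x => ⟨(⟨x.1.1, x.2.1, x.2.2.2.1⟩, ⟨x.1.2, x.2.2.1, x.2.2.2.2.1⟩),
        (finsum_add_eq_weightedSum_add x.2.2.2.1 x.2.2.2.2.1).symm.trans x.2.2.2.2.2⟩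
      invFun := fun y => ⟨(y.1.1.1, y.1.2.1), y.1.1.2.1, y.1.2.2.1, y.1.1.2.2, y.1.2.2.2,
        (finsum_add_eq_weightedSum_add y.1.1.2.2 y.1.2.2.2).trans y.2⟩
      left_inv := fun _ => rfl
      right_inv := fun _ => rfl }
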